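/- Let $F : X \to Y$ be as above (Fréchet differentiable, $\|F'(u)\|_{op} \le M$, $F'$ Lipschitz with constant $L_F$ on a convex bounded set $U$ of diameter $\le D$), $f^\delta \in Y$ with $\|F(v)-f^\delta\| \le R$ for all $v \in U$, and define $f(u) = \tfrac12\|F(u)-f^\delta\|^2$ and the Gauss–Newton model $g(u,v) = \tfrac12\|F'(v)[u-v] + F(v) - f^\delta\|^2$. Then there is a constant $L_2 = R L_F + \tfrac{L_F^2 D^2}{4}$ such that $|g(u,v) - f(u)| \le \tfrac{L_2}{2} \|u-v\|^2$ for all $u, v \in U$. -/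

import Mathlib

open Set

/-- Quadratic Taylor remainder bound for a function with Lipschitz derivative
on a convex set. -/
lemma taylor_remainder_bound
    {X Y : Type*} [NormedAddCommGroup X] [NormedSpace ℝ X]
    [NormedAddCommGroup Y] [NormedSpace ℝ Y]
    (F : X → Y) (F' : X → X →L[ℝ] Y) (U : Set X) (hU : Convex ℝ U) (LF : ℝ)
    (hdiff : ∀ u ∈ U, HasFDerivWithinAt F (F' u) U u)
    (hlip : ∀ u ∈ U, ∀ v ∈ U, ‖F' u - F' v‖ ≤ LF * ‖u - v‖)
    {u v : X} (hu : u ∈ U) (hv : v ∈ U) :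
    ‖F u - F v - F' v (u - v)‖ ≤ LF / 2 * ‖u - v‖ ^ 2 := by
  set c : Y := F' v (u - v) with hc
  set K : ℝ := LF * ‖u - v‖ ^ 2 with hK
  set γ : ℝ → X := fun t => v + t • (u - v) with hγ
  have hγU : ∀ t ∈ Icc (0:ℝ) 1, γ t ∈ U := fun t ht => hU.add_smul_sub_mem hv hu ht
  have hγd : ∀ t : ℝ, HasDerivWithinAt γ (u - v) (Icc (0:ℝ) 1) t := by
    intro t
    have h1 : HasDerivAt (fun s : ℝ => v + s • (u - v)) ((1:ℝ) • (u - v)) t :=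
      ((hasDerivAt_id t).smul_const (u - v)).const_add v
    simpa only [one_smul] using h1.hasDerivWithinAt
  set h : ℝ → Y := fun t => F (γ t) - F v - t • c with hh
  have hderiv : ∀ t ∈ Icc (0:ℝ) 1,
      HasDerivWithinAt h (F' (γ t) (u - v) - c) (Icc (0:ℝ) 1) t := by
    intro t ht
    have h1 : HasDerivWithinAt (fun s => F (γ s)) (F' (γ t) (u - v)) (Icc (0:ℝ) 1) t :=
      (hdiff (γ t) (hγU t ht)).comp_hasDerivWithinAt t (hγd t) (fun s hs => hγU s hs)
    have h2 : HasDerivWithinAt (fun s : ℝ => s • c) c (Icc (0:ℝ) 1) t := by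
      simpa using ((hasDerivAt_id t).smul_const c).hasDerivWithinAt
    exact (h1.sub_const (F v)).sub h2
  have hcont : ContinuousOn h (Icc (0:ℝ) 1) :=
    fun t ht => (hderiv t ht).continuousWithinAt
  have hderiv' : ∀ t ∈ Ico (0:ℝ) 1,
      HasDerivWithinAt h (F' (γ t) (u - v) - c) (Ici t) t := by
    intro t ht
    exact (hderiv t (Ico_subset_Icc_self ht)).mono_of_mem_nhdsWithin (Icc_mem_nhdsGE_of_mem ht)
  have hbound : ∀ t ∈ Ico (0:ℝ) 1, ‖F' (γ t) (u - v) - c‖ ≤ K * t := by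
    intro t ht
    have e1 : F' (γ t) (u - v) - c = (F' (γ t) - F' v) (u - v) := by
      simp [hc]
    rw [e1]
    calc ‖(F' (γ t) - F' v) (u - v)‖ ≤ ‖F' (γ t) - F' v‖ * ‖u - v‖ :=
          (F' (γ t) - F' v).le_opNorm (u - v)
      _ ≤ (LF * ‖γ t - v‖) * ‖u - v‖ := by
          apply mul_le_mul_of_nonneg_right _ (norm_nonneg _)
          exact hlip (γ t) (hγU t (Ico_subset_Icc_self ht)) v hv
      _ = K * t := by
          have : γ t - v = t • (u - v) := by simp [hγ]
          rw [this, norm_smul, Real.norm_eq_abs, abs_of_nonneg ht.1, hK]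
          ring
  have hB : ∀ t : ℝ, HasDerivAt (fun s => K / 2 * s ^ 2) (K * t) t := by
    intro t
    have := (hasDerivAt_pow 2 t).const_mul (K / 2)
    convert this using 1
    · rfl
    · rfl
    simp
    ring
  have key := image_norm_le_of_norm_deriv_right_le_deriv_boundary hcont hderiv'
    (by simp [hh, hγ] : ‖h 0‖ ≤ K / 2 * (0:ℝ) ^ 2) hB hbound
    (right_mem_Icc.2 zero_le_one)
  have h1 : h 1 = F u - F v - c := by simp [hh, hγ]
  rw [h1] at key
  calc ‖F u - F v - F' v (u - v)‖ = ‖F u - F v - c‖ := rfl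
    _ ≤ K / 2 * (1:ℝ) ^ 2 := key
    _ = LF / 2 * ‖u - v‖ ^ 2 := by rw [hK]; ring

/-- Fundamental inequality for the Gauss–Newton / Levenberg–Marquardt model
function: the model approximates the least-squares objective to second order. -/
theorem gauss_newton_model_error
    {X Y : Type*} [NormedAddCommGroup X] [NormedSpace ℝ X] [CompleteSpace X]
    [NormedAddCommGroup Y] [InnerProductSpace ℝ Y] [CompleteSpace Y]
    (F : X → Y) (F' : X → X →L[ℝ] Y) (U : Set X) (hU : Convex ℝ U)
    (M LF D R : ℝ)
    (hdiff : ∀ u ∈ U, HasFDerivWithinAt F (F' u) U u)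
    (hbdd : ∀ u ∈ U, ‖F' u‖ ≤ M)
    (hlip : ∀ u ∈ U, ∀ v ∈ U, ‖F' u - F' v‖ ≤ LF * ‖u - v‖)
    (hdiam : ∀ u ∈ U, ∀ v ∈ U, ‖u - v‖ ≤ D)
    (fδ : Y) (hres : ∀ v ∈ U, ‖F v - fδ‖ ≤ R)
    (f : X → ℝ) (hf : ∀ u, f u = 1 / 2 * ‖F u - fδ‖ ^ 2)
    (g : X → X → ℝ)
    (hg : ∀ u v, g u v = 1 / 2 * ‖F' v (u - v) + F v - fδ‖ ^ 2) :
    ∀ u ∈ U, ∀ v ∈ U,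
      |g u v - f u| ≤ (R * LF + LF ^ 2 * D ^ 2 / 4) / 2 * ‖u - v‖ ^ 2 := by
  intro u hu v hv
  by_cases huv : u = v
  · subst huv
    simp [hg, hf]
  have hn0 : (0:ℝ) < ‖u - v‖ := by
    rw [norm_pos_iff]; exact sub_ne_zero.2 huv
  have hLF : 0 ≤ LF := by
    nlinarith [hlip u hu v hv, norm_nonneg (F' u - F' v)]
  have hR : 0 ≤ R := (norm_nonneg _).trans (hres v hv)
  set w1 : Y := F' v (u - v) + F v - fδ with hw1
  set w2 : Y := F u - fδ with hw2
  have hBdef : w1 - w2 = -(F u - F v - F' v (u - v)) := by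
    rw [hw1, hw2]; abel
  have hB : ‖w1 - w2‖ ≤ LF / 2 * ‖u - v‖ ^ 2 := by
    rw [hBdef, norm_neg]
    exact taylor_remainder_bound F F' U hU LF hdiff hlip hu hv
  have hB0 : (0:ℝ) ≤ ‖w1 - w2‖ := norm_nonneg _
  have h12 : ‖w1‖ ≤ ‖w2‖ + ‖w1 - w2‖ := by
    calc ‖w1‖ = ‖w2 + (w1 - w2)‖ := congrArg norm (by abel)
      _ ≤ ‖w2‖ + ‖w1 - w2‖ := norm_add_le _ _
  have h21 : ‖w2‖ ≤ ‖w1‖ + ‖w1 - w2‖ := by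
    calc ‖w2‖ = ‖w1 - (w1 - w2)‖ := congrArg norm (by abel)
      _ ≤ ‖w1‖ + ‖w1 - w2‖ := norm_sub_le _ _
  have habs : |g u v - f u| ≤ ‖w2‖ * ‖w1 - w2‖ + ‖w1 - w2‖ ^ 2 / 2 := by
    rw [hg, hf]
    rw [abs_le]
    constructor <;> nlinarith [norm_nonneg w1, norm_nonneg w2]
  have hR2 : ‖w2‖ ≤ R := hres u hu
  have hnD : ‖u - v‖ ≤ D := hdiam u hu v hv
  have h1 : ‖w2‖ * ‖w1 - w2‖ ≤ R * (LF / 2 * ‖u - v‖ ^ 2) :=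
    mul_le_mul hR2 hB hB0 hR
  have h2 : ‖w1 - w2‖ ^ 2 ≤ (LF / 2 * ‖u - v‖ ^ 2) ^ 2 := by
    rw [sq, sq]
    exact mul_le_mul hB hB hB0 (by positivity)
  have h3 : ‖u - v‖ ^ 2 ≤ D ^ 2 := by
    rw [sq, sq]
    exact mul_le_mul hnD hnD hn0.le ((norm_nonneg _).trans hnD)
  have h4 : (LF / 2 * ‖u - v‖ ^ 2) ^ 2 ≤ LF ^ 2 / 4 * D ^ 2 * ‖u - v‖ ^ 2 := by
    have : (LF / 2 * ‖u - v‖ ^ 2) ^ 2 = LF ^ 2 / 4 * ‖u - v‖ ^ 2 * ‖u - v‖ ^ 2 := by ring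
    rw [this]
    exact mul_le_mul_of_nonneg_right (mul_le_mul_of_nonneg_left h3 (by positivity))
      (sq_nonneg _)
  nlinarith [h1, h2, h4, habs]
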